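/- Let G be a graph, O ⊆ V, and let λ assign label X to every vertex of V∖O. If the labelled open graph (G, ∅, O, λ) does not have a Pauli flow, then (G, I, O, λ) does not have a Pauli flow for any choice of input set I ⊆ V. Conversely, if (G, ∅, O, λ) has a Pauli flow, then there exists I ⊆ V with |I| = |O| such that (G, I, O, λ) has a Pauli flow. -/

import Mathlib

inductive MLabel | X | Y | Z | XY | XZ | YZ
deriving DecidableEq

open Finset

variable {V : Type} [Fintype V] [DecidableEq V]

/-- The odd neighbourhood of a set of vertices. -/
def Odds (G : SimpleGraph V) [DecidableRel G.Adj] (A : Finset V) : Finset V :=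
  Finset.univ.filter fun v => Odd (A ∩ G.neighborFinset v).card

/-- Pauli flow conditions (P1)-(P9) for a labelled open graph. -/
structure PauliFlow (G : SimpleGraph V) [DecidableRel G.Adj]
    (I O : Finset V) (lam : V → MLabel) (c : V → Finset V) (prec : V → V → Prop) : Prop where
  irrefl : ∀ u, ¬ prec u u
  trans : ∀ u v w, prec u v → prec v w → prec u w
  csub : ∀ u, u ∉ O → ∀ v ∈ c u, v ∉ I
  P1 : ∀ u, u ∉ O → ∀ v ∈ c u, v ∉ O → u ≠ v →
      lam v ≠ MLabel.X → lam v ≠ MLabel.Y → prec u v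
  P2 : ∀ u, u ∉ O → ∀ v ∈ Odds G (c u), v ∉ O → u ≠ v →
      lam v ≠ MLabel.Y → lam v ≠ MLabel.Z → prec u v
  P3 : ∀ u, u ∉ O → ∀ v, v ∉ O → ¬ prec u v → u ≠ v → lam v = MLabel.Y →
      (v ∈ c u ↔ v ∈ Odds G (c u))
  P4 : ∀ u, u ∉ O → lam u = MLabel.XY → u ∉ c u ∧ u ∈ Odds G (c u)
  P5 : ∀ u, u ∉ O → lam u = MLabel.XZ → u ∈ c u ∧ u ∈ Odds G (c u)
  P6 : ∀ u, u ∉ O → lam u = MLabel.YZ → u ∈ c u ∧ u ∉ Odds G (c u)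
  P7 : ∀ u, u ∉ O → lam u = MLabel.X → u ∈ Odds G (c u)
  P8 : ∀ u, u ∉ O → lam u = MLabel.Z → u ∈ c u
  P9 : ∀ u, u ∉ O → lam u = MLabel.Y → Xor' (u ∈ c u) (u ∈ Odds G (c u))

/-- Focussing conditions (F1)-(F3). -/
def Focussed (G : SimpleGraph V) [DecidableRel G.Adj]
    (O : Finset V) (lam : V → MLabel) (c : V → Finset V) : Prop :=
  ∀ v, v ∉ O →
    (∀ w, w ∉ O → w ≠ v → w ∈ c v →
      lam w = MLabel.XY ∨ lam w = MLabel.X ∨ lam w = MLabel.Y) ∧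
    (∀ w, w ∉ O → w ≠ v → w ∈ Odds G (c v) →
      lam w = MLabel.XZ ∨ lam w = MLabel.YZ ∨ lam w = MLabel.Y ∨ lam w = MLabel.Z) ∧
    (∀ w, w ∉ O → w ≠ v → lam w = MLabel.Y → (w ∈ c v ↔ w ∈ Odds G (c v)))

/-- The reduced adjacency matrix over F₂: rows indexed by non-outputs, columns by non-inputs. -/
def redAdj (G : SimpleGraph V) [DecidableRel G.Adj] (I O : Finset V) :
    Matrix {v : V // v ∉ O} {v : V // v ∉ I} (ZMod 2) :=
  Matrix.of fun v u => if G.Adj v.val u.val then 1 else 0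

/-!
Only (csub) mentions the inputs, so a flow for `(G, I, O)` is one for `(G, ∅, O)`.
Conversely, for the all-X labelling (P2) and (P7) say that the odd neighbourhood of `c u` meets
`V ∖ O` in `u` and otherwise only in vertices after `u`. Going backwards along the order, every unit
vector on `V ∖ O` is a sum of columns of the adjacency matrix restricted to the rows `V ∖ O`.
The columns therefore contain a basis, indexed by some `S` with `|S| = |V ∖ O|`. Writing `e_u` as a
sum of basis columns gives `c u ⊆ S` whose odd neighbourhood meets `V ∖ O` exactly in `u`: a
Pauli flow with inputs `V ∖ S` (of size `|O|`) and the empty order.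
-/

theorem PauliFlow.of_inputs_subset {G : SimpleGraph V} [DecidableRel G.Adj] {I I' O : Finset V}
    {lam : V → MLabel} {c : V → Finset V} {prec : V → V → Prop} (hI : I' ⊆ I)
    (pf : PauliFlow G I O lam c prec) : PauliFlow G I' O lam c prec :=
  { pf with csub := fun u hu v hv hvI => pf.csub u hu v hv (hI hvI) }

section LinearAlgebra

open Submodule Module

theorem exists_finset_card_eq_finrank_span_image_eq_top {K M ι : Type*} [DivisionRing K]
    [AddCommGroup M] [Module K M] [FiniteDimensional K M] [Finite ι] {v : ι → M}
    (hv : span K (Set.range v) = ⊤) :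
    ∃ S : Finset ι, S.card = finrank K M ∧ span K (v '' S) = ⊤ := by
  obtain ⟨b, -, -, hb_span, hb_indep⟩ :=
    exists_linearIndepOn_extension (linearIndepOn_empty K v) (Set.empty_subset Set.univ)
  obtain ⟨S, rfl⟩ := b.toFinite.exists_finset_coe
  have hS_span : span K (v '' S) = ⊤ :=
    eq_top_iff.mpr (hv ▸ span_le.mpr (Set.image_univ ▸ hb_span))
  refine ⟨S, ?_, hS_span⟩
  have := finrank_span_eq_card hb_indep
  rw [← Set.image_eq_range, hS_span, finrank_top] at this
  simpa using this.symm

theorem exists_subset_sum_eq_of_mem_span_image {M ι : Type*} [AddCommGroup M]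
    [Module (ZMod 2) M] {v : ι → M} {S : Set ι} {x : M} (hx : x ∈ span (ZMod 2) (v '' S)) :
    ∃ A : Finset ι, ↑A ⊆ S ∧ ∑ i ∈ A, v i = x := by
  obtain ⟨l, hl, rfl⟩ := (Finsupp.mem_span_image_iff_linearCombination (ZMod 2)).mp hx
  refine ⟨l.support, (Finsupp.mem_supported _ l).mp hl, ?_⟩
  rw [Finsupp.linearCombination_apply, Finsupp.sum]
  refine Finset.sum_congr rfl fun i hi => ?_
  have h_one : ∀ a : ZMod 2, a ≠ 0 → a = 1 := by decide
  rw [h_one _ (Finsupp.mem_support_iff.mp hi), one_smul]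

end LinearAlgebra

section AdjacencyColumns

variable (G : SimpleGraph V) [DecidableRel G.Adj] (O : Finset V)

/-- Column `j` of `redAdj G ∅ O`. -/
def adjCol (j : V) : {v : V // v ∉ O} → ZMod 2 :=
  fun w => if G.Adj w j then 1 else 0

theorem sum_adjCol_apply (A : Finset V) (w : {v : V // v ∉ O}) :
    (∑ j ∈ A, adjCol G O j) w = if w.val ∈ Odds G A then 1 else 0 := by
  have h_inter : A.filter (G.Adj w) = A ∩ G.neighborFinset w := by
    ext; simp [SimpleGraph.mem_neighborFinset]
  simp only [Finset.sum_apply, adjCol, Finset.sum_boole, Odds, Finset.mem_filter,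
    Finset.mem_univ, true_and, h_inter]
  split_ifs with h
  · exact ZMod.natCast_eq_one_iff_odd.mpr h
  · exact ZMod.natCast_eq_zero_iff_even.mpr (Nat.not_odd_iff_even.mp h)

variable {G O}

theorem mem_odds_iff_of_sum_adjCol_eq_single {A : Finset V} {u : {v : V // v ∉ O}}
    (hA : ∑ j ∈ A, adjCol G O j = Pi.single u 1) {w : V} (hw : w ∉ O) :
    w ∈ Odds G A ↔ w = u := by
  have := congrFun hA ⟨w, hw⟩
  simp only [sum_adjCol_apply, Pi.single_apply, Subtype.ext_iff] at this
  split_ifs at this <;> simp_all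

theorem PauliFlow.single_mem_span_adjCol {I : Finset V} {c : V → Finset V}
    {prec : V → V → Prop} (pf : PauliFlow G I O (fun _ => .X) c prec) (u : {v : V // v ∉ O}) :
    Pi.single u 1 ∈ Submodule.span (ZMod 2) (Set.range (adjCol G O)) := by
  have : IsStrictOrder V (fun a b => prec b a) :=
    { irrefl := pf.irrefl, trans := fun a b c hab hbc => pf.trans c b a hbc hab }
  obtain ⟨u, hu⟩ := u
  induction u using (Finite.wellFounded_of_trans_of_irrefl (fun a b => prec b a)).induction with
  | _ u ih =>
    set y := ∑ j ∈ c u, adjCol G O j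
    have hy_odds (w : {v : V // v ∉ O}) : y w = if w.val ∈ Odds G (c u) then 1 else 0 :=
      sum_adjCol_apply G O (c u) w
    have hy_self : y ⟨u, hu⟩ = 1 := by rw [hy_odds, if_pos (pf.P7 u hu rfl)]
    have h_decomp :
        Pi.single ⟨u, hu⟩ 1 + ∑ w ∈ Finset.univ.erase ⟨u, hu⟩, Pi.single w (y w) = y :=
      calc _ = ∑ w, Pi.single w (y w) := by
            rw [← hy_self, Finset.add_sum_erase _ (fun w => Pi.single w (y w)) (Finset.mem_univ _)]
        _ = y := Finset.univ_sum_single y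
    rw [eq_sub_of_add_eq h_decomp]
    refine Submodule.sub_mem _ (Submodule.sum_mem _ fun j _ => Submodule.subset_span ⟨j, rfl⟩)
      (Submodule.sum_mem _ fun w hw => ?_)
    rw [hy_odds]
    split_ifs with hw_odds
    · have hne : u ≠ w := fun h => Finset.ne_of_mem_erase hw (Subtype.ext h.symm)
      exact ih w (pf.P2 u hu w hw_odds w.2 hne nofun nofun) w.2
    · rw [Pi.single_zero]
      exact Submodule.zero_mem _

theorem PauliFlow.span_adjCol_eq_top {I : Finset V} {c : V → Finset V} {prec : V → V → Prop}
    (pf : PauliFlow G I O (fun _ => .X) c prec) :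
    Submodule.span (ZMod 2) (Set.range (adjCol G O)) = ⊤ := by
  rw [eq_top_iff, ← (Pi.basisFun (ZMod 2) {v : V // v ∉ O}).span_eq, Submodule.span_le]
  rintro _ ⟨u, rfl⟩
  simpa using pf.single_mem_span_adjCol u

theorem pauliFlow_allX_of_odds {I : Finset V} {c : V → Finset V}
    (hc_inputs : ∀ u, u ∉ O → ∀ v ∈ c u, v ∉ I)
    (hc_odds : ∀ u, u ∉ O → ∀ w, w ∉ O → (w ∈ Odds G (c u) ↔ w = u)) :
    PauliFlow G I O (fun _ => .X) c (fun _ _ => False) where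
  irrefl _ := id
  trans _ _ _ h := h.elim
  csub := hc_inputs
  P1 _ _ _ _ _ _ hX := absurd rfl hX
  P2 u hu v hv hvO hne _ _ := hne ((hc_odds u hu v hvO).mp hv).symm
  P3 _ _ _ _ _ _ hY := nomatch hY
  P4 _ _ h := nomatch h
  P5 _ _ h := nomatch h
  P6 _ _ h := nomatch h
  P7 u hu _ := (hc_odds u hu u hu).mpr rfl
  P8 _ _ h := nomatch h
  P9 _ _ h := nomatch h

end AdjacencyColumns

/-- For the all-X labelling: if `(G,∅,O)` has no Pauli flow then `(G,I,O)` has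
no Pauli flow for any input set `I`; and if `(G,∅,O)` has a Pauli flow then
some `I` with `|I| = |O|` gives a Pauli flow. -/
theorem choose_inputs_all_X (G : SimpleGraph V) [DecidableRel G.Adj]
    (O : Finset V) :
    (¬ (∃ (c : V → Finset V) (prec : V → V → Prop),
          PauliFlow G ∅ O (fun _ => MLabel.X) c prec) →
      ∀ I : Finset V, ¬ (∃ (c : V → Finset V) (prec : V → V → Prop),
          PauliFlow G I O (fun _ => MLabel.X) c prec)) ∧
    ((∃ (c : V → Finset V) (prec : V → V → Prop),
          PauliFlow G ∅ O (fun _ => MLabel.X) c prec) →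
      ∃ I : Finset V, I.card = O.card ∧
        ∃ (c : V → Finset V) (prec : V → V → Prop),
          PauliFlow G I O (fun _ => MLabel.X) c prec) := by
  refine ⟨fun h_none I ⟨c, prec, pf⟩ => h_none ⟨c, prec, pf.of_inputs_subset I.empty_subset⟩, ?_⟩
  rintro ⟨c, prec, pf⟩
  obtain ⟨S, hS_card, hS_span⟩ :=
    exists_finset_card_eq_finrank_span_image_eq_top pf.span_adjCol_eq_top
  have h_solve (u : {v : V // v ∉ O}) :=
    exists_subset_sum_eq_of_mem_span_image (hS_span ▸ Submodule.mem_top (x := Pi.single u 1))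
  choose A hA_sub hA_sum using h_solve
  refine ⟨Sᶜ, ?_, fun u => if hu : u ∈ O then ∅ else A ⟨u, hu⟩, fun _ _ => False,
    pauliFlow_allX_of_odds ?_ ?_⟩
  · rw [Finset.card_compl, hS_card, Module.finrank_fintype_fun_eq_card,
      Fintype.card_subtype_compl, Fintype.card_coe]
    have := O.card_le_univ
    omega
  · intro u hu v hv
    rw [dif_neg hu] at hv
    simpa using hA_sub _ hv
  · intro u hu w hw
    rw [dif_neg hu]
    exact mem_odds_iff_of_sum_adjCol_eq_single (hA_sum _) hw
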